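/- arXiv:1008.1145 — 3 statements merged into one kernel-verified Lean document; each statement's English description precedes it below -/
import Mathlib

section
/- For all x > 0, the exponential integral satisfies 1/(x+2) ≤ (1/2)·log(1 + 2/x) ≤ e^x · E₁(x) ≤ log(1 + 1/x) ≤ 1/x, where E₁(x) = ∫_x^∞ e^{-t}/t dt. -/
open Real MeasureTheory Set Filter

/-- The exponential integral `E₁(x) = ∫_x^∞ e^{-t}/t dt`. -/
noncomputable def expInt (x : ℝ) : ℝ := ∫ t in Set.Ioi x, Real.exp (-t) / t

lemma f_integrableOn {x : ℝ} (hx : 0 < x) :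
    IntegrableOn (fun t => Real.exp (-t) / t) (Set.Ioi x) := by
  have h1 : IntegrableOn (fun t => Real.exp (-t) * (1/x)) (Set.Ioi x) := by
    simpa [IntegrableOn] using (exp_neg_integrableOn_Ioi x (by norm_num : (0:ℝ) < 1)).mul_const (1/x)
  refine h1.integrable.mono ?_ ?_
  · exact (((Real.continuous_exp.comp continuous_neg).measurable.div
      measurable_id).aestronglyMeasurable).restrict
  · filter_upwards [MeasureTheory.ae_restrict_mem measurableSet_Ioi] with t ht
    have htx : x < t := ht
    have ht0 : 0 < t := hx.trans htx
    rw [Real.norm_eq_abs, Real.norm_eq_abs]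
    rw [abs_of_nonneg (by positivity), abs_of_nonneg (by positivity)]
    rw [div_eq_mul_inv]
    rw [one_div]
    gcongr

lemma f_contAt {y : ℝ} (hy : 0 < y) : ContinuousAt (fun t => Real.exp (-t) / t) y :=
  ((Real.continuous_exp.comp continuous_neg).continuousAt).div continuousAt_id hy.ne'

lemma expInt_split_le {a y : ℝ} (ha : 0 < a) (hy : 0 < y) (h : y ≤ a) :
    expInt y = (∫ t in y..a, Real.exp (-t) / t) + expInt a := by
  rw [intervalIntegral.integral_of_le h]
  unfold expInt
  rw [← MeasureTheory.setIntegral_union (Set.Ioc_disjoint_Ioi le_rfl) measurableSet_Ioi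
      ((f_integrableOn hy).mono_set Set.Ioc_subset_Ioi_self) (f_integrableOn ha),
    Set.Ioc_union_Ioi_eq_Ioi h]

lemma expInt_split {a y : ℝ} (ha : 0 < a) (hy : 0 < y) :
    expInt y = (∫ t in y..a, Real.exp (-t) / t) + expInt a := by
  rcases le_total y a with h | h
  · exact expInt_split_le ha hy h
  · have := expInt_split_le hy ha h
    rw [intervalIntegral.integral_symm]
    linarith

lemma expInt_hasDerivAt {x : ℝ} (hx : 0 < x) :
    HasDerivAt expInt (-(Real.exp (-x) / x)) x := by
  have h := intervalIntegral.integral_hasDerivAt_left (f := fun t => Real.exp (-t) / t)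
    (a := x) (b := x) IntervalIntegrable.refl
    (ContinuousAt.stronglyMeasurableAtFilter isOpen_Ioi
      (fun t (ht : t ∈ Set.Ioi (0:ℝ)) => f_contAt ht) x hx)
    (f_contAt hx)
  have h2 : HasDerivAt (fun u => (∫ t in u..x, Real.exp (-t) / t) + expInt x)
      (-(Real.exp (-x) / x)) x := by
    simpa using (h.add_const (expInt x))
  exact h2.congr_of_eventuallyEq <| by
    filter_upwards [isOpen_Ioi.mem_nhds hx] with y hy
    exact expInt_split hx hy

lemma expInt_nonneg {x : ℝ} (hx : 0 < x) : 0 ≤ expInt x := by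
  refine MeasureTheory.setIntegral_nonneg measurableSet_Ioi fun t ht => ?_
  have : 0 < t := hx.trans ht
  positivity

lemma expInt_le {x : ℝ} (hx : 0 < x) : expInt x ≤ Real.exp (-x) / x := by
  have h1 : expInt x ≤ ∫ t in Set.Ioi x, Real.exp (-t) / x := by
    refine MeasureTheory.setIntegral_mono_on (f_integrableOn hx)
      (by simpa [div_eq_mul_inv, IntegrableOn] using
        (exp_neg_integrableOn_Ioi x (by norm_num : (0:ℝ) < 1)).mul_const x⁻¹)
      measurableSet_Ioi fun t ht => ?_
    · have htx : x < t := ht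
      gcongr
  calc expInt x ≤ _ := h1
    _ = Real.exp (-x) / x := by
        rw [MeasureTheory.integral_div, integral_exp_neg_Ioi]

lemma expInt_tendsto : Filter.Tendsto expInt Filter.atTop (nhds 0) := by
  have h0 : Filter.Tendsto (fun x : ℝ => Real.exp (-x) / x) Filter.atTop (nhds 0) := by
    have := Real.tendsto_exp_neg_atTop_nhds_zero.div_atTop Filter.tendsto_id
    simpa using this
  refine squeeze_zero' ?_ ?_ h0
  · filter_upwards [Filter.eventually_gt_atTop 0] with y hy using expInt_nonneg hy
  · filter_upwards [Filter.eventually_gt_atTop 0] with y hy using expInt_le hy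

lemma nonneg_of_deriv_nonpos_tendsto {φ φ' : ℝ → ℝ}
    (hd : ∀ y, 0 < y → HasDerivAt φ (φ' y) y)
    (hn : ∀ y, 0 < y → φ' y ≤ 0)
    (hl : Filter.Tendsto φ Filter.atTop (nhds 0)) {x : ℝ} (hx : 0 < x) : 0 ≤ φ x := by
  have hA : AntitoneOn φ (Set.Ici x) := by
    refine antitoneOn_of_deriv_nonpos (convex_Ici x) ?_ ?_ ?_
    · intro y hy
      exact ((hd y (hx.trans_le hy)).continuousAt).continuousWithinAt
    · intro y hy
      rw [interior_Ici] at hy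
      exact ((hd y (hx.trans hy)).differentiableAt).differentiableWithinAt
    · intro y hy
      rw [interior_Ici] at hy
      rw [(hd y (hx.trans hy)).deriv]
      exact hn y (hx.trans hy)
  refine le_of_tendsto hl ?_
  filter_upwards [Filter.eventually_ge_atTop x] with y hy
  exact hA Set.self_mem_Ici hy hy

lemma log_ge_one_sub_inv {t : ℝ} (ht : 0 < t) : 1 - 1/t ≤ Real.log t := by
  have h := Real.log_le_sub_one_of_pos (show (0:ℝ) < 1/t by positivity)
  rw [one_div, Real.log_inv] at h
  rw [one_div]
  linarith

lemma log_le_half_sub_inv {t : ℝ} (ht : 1 ≤ t) : Real.log t ≤ (t - 1/t) / 2 := by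
  have ht0 : 0 < t := lt_of_lt_of_le one_pos ht
  have hu : 0 ≤ Real.log t := Real.log_nonneg ht
  rcases eq_or_lt_of_le hu with h | h
  · rw [← h]
    have : 1/t ≤ 1 := by rw [div_le_one ht0]; exact ht
    linarith
  · have hs : Real.log t < Real.sinh (Real.log t) := Real.self_lt_sinh_iff.mpr h
    rw [Real.sinh_eq, Real.exp_log ht0, Real.exp_neg, Real.exp_log ht0, ← one_div] at hs
    linarith

lemma ell_hasDerivAt {y c : ℝ} (hy : 0 < y) (hc : 0 < c) :
    HasDerivAt (fun z => Real.log (1 + c / z)) (-c / (y * (y + c))) y := by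
  have h1 : HasDerivAt (fun z : ℝ => 1 + c / z) (c * (-(y^2)⁻¹)) y := by
    simpa [div_eq_mul_inv] using ((hasDerivAt_inv hy.ne').const_mul c).const_add 1
  have h2 : (0:ℝ) < 1 + c / y := by positivity
  have h := h1.log h2.ne'
  convert h using 1
  field_simp

lemma expNeg_hasDerivAt (y : ℝ) :
    HasDerivAt (fun z : ℝ => Real.exp (-z)) (-Real.exp (-y)) y := by
  simpa using (hasDerivAt_neg y).exp

lemma tendsto_ell (c : ℝ) :
    Filter.Tendsto (fun z : ℝ => Real.log (1 + c / z)) Filter.atTop (nhds 0) := by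
  have h1 : Filter.Tendsto (fun z : ℝ => 1 + c / z) Filter.atTop (nhds 1) := by
    simpa [div_eq_mul_inv] using (tendsto_const_nhds.add ((tendsto_inv_atTop_zero).const_mul c))
  have := (Real.continuousAt_log (by norm_num : (1:ℝ) ≠ 0)).tendsto.comp h1
  simpa [Function.comp_def] using this

lemma F_hasDerivAt {y : ℝ} (hy : 0 < y) :
    HasDerivAt (fun z => expInt z - Real.exp (-z) * ((1/2) * Real.log (1 + 2/z)))
      (Real.exp (-y) * ((1/2) * Real.log (1 + 2/y) + 1/(y*(y+2)) - 1/y)) y := by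
  have h := (expInt_hasDerivAt hy).sub
    ((expNeg_hasDerivAt y).mul ((ell_hasDerivAt hy (by norm_num : (0:ℝ) < 2)).const_mul (1/2)))
  refine h.congr_deriv ?_
  field_simp
  ring

lemma G_hasDerivAt {y : ℝ} (hy : 0 < y) :
    HasDerivAt (fun z => Real.exp (-z) * Real.log (1 + 1/z) - expInt z)
      (Real.exp (-y) * (1/y - 1/(y*(y+1)) - Real.log (1 + 1/y))) y := by
  have h := ((expNeg_hasDerivAt y).mul (ell_hasDerivAt hy one_pos)).sub (expInt_hasDerivAt hy)
  refine h.congr_deriv ?_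
  field_simp
  ring

lemma middle_lower {x : ℝ} (hx : 0 < x) :
    Real.exp (-x) * ((1/2) * Real.log (1 + 2/x)) ≤ expInt x := by
  have h := nonneg_of_deriv_nonpos_tendsto (φ' := fun y =>
      Real.exp (-y) * ((1/2) * Real.log (1 + 2/y) + 1/(y*(y+2)) - 1/y))
    (fun y hy => F_hasDerivAt hy) ?_ ?_ hx
  · linarith
  · intro y hy
    have ht1 : (1:ℝ) ≤ 1 + 2/y := by
      have : 0 < 2/y := by positivity
      linarith
    have hL := log_le_half_sub_inv ht1
    have heq : ((1 + 2/y) - 1/(1 + 2/y)) / 2 = 2*(y+1)/(y*(y+2)) := by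
      have h2 : (0:ℝ) < 1 + 2/y := by positivity
      field_simp
      ring
    rw [heq] at hL
    have hkey : (1/2) * Real.log (1 + 2/y) + 1/(y*(y+2)) - 1/y ≤ 0 := by
      rw [show (1/2) * Real.log (1 + 2/y) + 1/(y*(y+2)) - 1/y
          = (1/2) * (Real.log (1 + 2/y) - 2*(y+1)/(y*(y+2))) from by field_simp; ring]
      linarith
    exact mul_nonpos_of_nonneg_of_nonpos (Real.exp_pos _).le hkey
  · have h1 := Real.tendsto_exp_neg_atTop_nhds_zero.mul
      ((tendsto_ell 2).const_mul (1/2))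
    simp only [mul_zero, zero_mul] at h1
    have := expInt_tendsto.sub h1
    simpa [mul_comm] using this

lemma middle_upper {x : ℝ} (hx : 0 < x) :
    expInt x ≤ Real.exp (-x) * Real.log (1 + 1/x) := by
  have h := nonneg_of_deriv_nonpos_tendsto (φ' := fun y =>
      Real.exp (-y) * (1/y - 1/(y*(y+1)) - Real.log (1 + 1/y)))
    (fun y hy => G_hasDerivAt hy) ?_ ?_ hx
  · linarith
  · intro y hy
    have h2 : (0:ℝ) < 1 + 1/y := by positivity
    have hL := log_ge_one_sub_inv h2
    have heq : 1 - 1/(1 + 1/y) = 1/(y+1) := by field_simp; ring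
    rw [heq] at hL
    have hkey : 1/y - 1/(y*(y+1)) - Real.log (1 + 1/y) ≤ 0 := by
      have : 1/y - 1/(y*(y+1)) = 1/(y+1) := by field_simp; ring
      linarith
    exact mul_nonpos_of_nonneg_of_nonpos (Real.exp_pos _).le hkey
  · have h1 := Real.tendsto_exp_neg_atTop_nhds_zero.mul (tendsto_ell 1)
    simp only [mul_zero] at h1
    have := h1.sub expInt_tendsto
    simpa using this

theorem expInt_bounds (x : ℝ) (hx : 0 < x) :
    1 / (x + 2) ≤ (1 / 2) * Real.log (1 + 2 / x) ∧
    (1 / 2) * Real.log (1 + 2 / x) ≤ Real.exp x * expInt x ∧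
    Real.exp x * expInt x ≤ Real.log (1 + 1 / x) ∧
    Real.log (1 + 1 / x) ≤ 1 / x := by
  have he : Real.exp x * Real.exp (-x) = 1 := by rw [← Real.exp_add]; simp
  refine ⟨?_, ?_, ?_, ?_⟩
  · have h2 : (0:ℝ) < 1 + 2/x := by positivity
    have hL := log_ge_one_sub_inv h2
    have heq : 1 - 1/(1 + 2/x) = 2/(x+2) := by field_simp; ring
    rw [heq] at hL
    rw [show (2:ℝ)/(x+2) = 2 * (1/(x+2)) from by ring] at hL
    linarith
  · calc (1/2) * Real.log (1 + 2/x)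
        = Real.exp x * (Real.exp (-x) * ((1/2) * Real.log (1 + 2/x))) := by
          rw [← mul_assoc, he, one_mul]
      _ ≤ Real.exp x * expInt x :=
          mul_le_mul_of_nonneg_left (middle_lower hx) (Real.exp_pos x).le
  · calc Real.exp x * expInt x
        ≤ Real.exp x * (Real.exp (-x) * Real.log (1 + 1/x)) :=
          mul_le_mul_of_nonneg_left (middle_upper hx) (Real.exp_pos x).le
      _ = Real.log (1 + 1/x) := by rw [← mul_assoc, he, one_mul]
  · have h2 : (0:ℝ) < 1 + 1/x := by positivity
    have := Real.log_le_sub_one_of_pos h2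
    linarith
end

section
/- If h is a unit vector uniformly (isotropically) distributed on the unit sphere of ℂ², and Λ = diag(λ₁, λ₂) with λ₁ > λ₂ ≥ 0, then the random variable Y = h^H Λ h has the uniform distribution on the interval [λ₂, λ₁]. -/
open MeasureTheory Metric Set
open scoped Pointwise ENNReal

noncomputable instance : MeasureSpace (EuclideanSpace ℂ (Fin 2)) where
  volume := (volume : Measure (Fin 2 → ℂ)).map (WithLp.toLp 2)

instance : BorelSpace (EuclideanSpace ℂ (Fin 2)) := inferInstance
instance : (volume : Measure (EuclideanSpace ℂ (Fin 2))).IsAddHaarMeasure :=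
  (PiLp.continuousLinearEquiv 2 ℝ (fun _ : Fin 2 => ℂ)).symm.isAddHaarMeasure_map volume

local notation "E2" => EuclideanSpace ℂ (Fin 2)


lemma vol_ball_sqrt (b : ℝ) :
    volume (ball (0:ℂ) (Real.sqrt b)) = ENNReal.ofReal b * NNReal.pi := by
  rcases le_or_gt b 0 with hb | hb
  · rw [Real.sqrt_eq_zero'.mpr (by linarith), ball_zero, measure_empty,
      ENNReal.ofReal_eq_zero.mpr hb, zero_mul]
  · rw [Complex.volume_ball, ← ENNReal.ofReal_pow (Real.sqrt_nonneg b),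
      Real.sq_sqrt hb.le]

lemma vol_annulus (a b : ℝ) (ha : 0 ≤ a) :
    volume (ball (0:ℂ) (Real.sqrt b) \ ball (0:ℂ) (Real.sqrt a))
      = ENNReal.ofReal (b - a) * NNReal.pi := by
  rcases le_or_gt b a with hba | hab
  · rw [Set.diff_eq_empty.mpr (ball_subset_ball (Real.sqrt_le_sqrt hba)), measure_empty,
      ENNReal.ofReal_eq_zero.mpr (by linarith), zero_mul]
  · rw [measure_diff (ball_subset_ball (Real.sqrt_le_sqrt hab.le))
      measurableSet_ball.nullMeasurableSet measure_ball_lt_top.ne,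
      vol_ball_sqrt, vol_ball_sqrt, ← ENNReal.sub_mul (fun _ _ => ENNReal.coe_ne_top),
      ← ENNReal.ofReal_sub _ ha]

lemma lint_line (s : ℝ) (hs : 0 ≤ s) :
    ∫⁻ t in Set.Ioi (0:ℝ), ENNReal.ofReal (s * (1 - t)) = ENNReal.ofReal (s/2) := by
  rw [← Set.Ioc_union_Ioi_eq_Ioi (zero_le_one (α := ℝ)),
    lintegral_union measurableSet_Ioi (by simp [Set.disjoint_left])]
  have h2 : ∫⁻ t in Set.Ioi (1:ℝ), ENNReal.ofReal (s * (1 - t)) = 0 := by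
    rw [setLIntegral_congr_fun measurableSet_Ioi
      (fun t (ht : 1 < t) => ?_), lintegral_zero]
    rw [ENNReal.ofReal_eq_zero.mpr]
    nlinarith
  have h1 : ∫⁻ t in Set.Ioc (0:ℝ) 1, ENNReal.ofReal (s * (1 - t)) = ENNReal.ofReal (s/2) := by
    rw [← ofReal_integral_eq_lintegral_ofReal]
    · rw [← intervalIntegral.integral_of_le zero_le_one]
      have : ∫ t in (0:ℝ)..1, s * (1 - t) = s/2 := by
        rw [intervalIntegral.integral_const_mul]
        simp [intervalIntegral.integral_sub intervalIntegrable_const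
          intervalIntegral.intervalIntegrable_id]
        ring
      rw [this]
    · exact (Continuous.integrableOn_Ioc (by continuity))
    · filter_upwards [ae_restrict_mem measurableSet_Ioc] with t ht
      exact mul_nonneg hs (by linarith [ht.2])
  rw [h1, h2, add_zero]

lemma lint_complex (s : ℝ) (hs : 0 < s) :
    ∫⁻ z : ℂ, ENNReal.ofReal (1 - ‖z‖^2/s) = ENNReal.ofReal (s/2) * NNReal.pi := by
  have hmax : ∀ z : ℂ, ENNReal.ofReal (1 - ‖z‖^2/s)
      = ENNReal.ofReal (max (1 - ‖z‖^2/s) 0) := by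
    intro z
    rcases le_total (1 - ‖z‖^2/s) 0 with h | h
    · rw [max_eq_right h, ENNReal.ofReal_eq_zero.mpr h, ENNReal.ofReal_zero]
    · rw [max_eq_left h]
  simp_rw [hmax]
  have hcont : Continuous fun z : ℂ => max (1 - ‖z‖^2/s) 0 :=
    (continuous_const.sub ((continuous_norm.pow 2).div_const s)).max continuous_const
  rw [lintegral_eq_lintegral_meas_lt (f := fun z : ℂ => max (1 - ‖z‖^2/s) 0) volume
    (ae_of_all _ fun z => le_max_right _ _) hcont.aemeasurable]
  have hset : ∀ t ∈ Set.Ioi (0:ℝ),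
      volume {z : ℂ | t < max (1 - ‖z‖^2/s) 0} = ENNReal.ofReal (s * (1 - t)) * NNReal.pi := by
    intro t (ht : 0 < t)
    have : {z : ℂ | t < max (1 - ‖z‖^2/s) 0} = ball (0:ℂ) (Real.sqrt (s * (1 - t))) := by
      ext z
      simp only [Set.mem_setOf_eq, mem_ball_zero_iff, lt_max_iff, Real.lt_sqrt (norm_nonneg z)]
      constructor
      · rintro (h | h)
        · have := (div_lt_iff₀ hs).mp (by linarith : ‖z‖^2/s < 1 - t)
          nlinarith
        · linarith
      · intro h
        exact Or.inl (by have := (div_lt_iff₀ hs).mpr (by nlinarith : ‖z‖^2 < (1-t)*s); linarith)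
    rw [this, vol_ball_sqrt]
  rw [setLIntegral_congr_fun measurableSet_Ioi hset,
    lintegral_mul_const _ (by fun_prop), lint_line s hs.le]

lemma null_coord : volume {x : Fin 2 → ℂ | x 0 = 0} = 0 := by
  have h : {x : Fin 2 → ℂ | x 0 = 0} = MeasurableEquiv.finTwoArrow ⁻¹' ({0} ×ˢ univ) := by
    ext x
    simp [MeasurableEquiv.finTwoArrow_apply, eq_comm]
  rw [h, (volume_preserving_finTwoArrow ℂ).measure_preimage
    ((MeasurableSet.singleton 0).prod MeasurableSet.univ).nullMeasurableSet,
    Measure.volume_eq_prod, Measure.prod_prod]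
  simp

lemma vol_cone_coords (s : ℝ) (h0 : 0 ≤ s) (h1 : s ≤ 1) :
    volume {x : Fin 2 → ℂ | ‖x 0‖^2 + ‖x 1‖^2 < 1 ∧ ‖x 0‖^2 ≤ s * (‖x 0‖^2 + ‖x 1‖^2)}
      = ENNReal.ofReal (s/2) * NNReal.pi * NNReal.pi := by
  rcases eq_or_lt_of_le h0 with rfl | hs
  · rw [ENNReal.ofReal_eq_zero.mpr (by norm_num), zero_mul, zero_mul]
    refine measure_mono_null (fun x hx => ?_) null_coord
    have h := hx.2
    have := sq_nonneg ‖x 0‖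
    simp only [Set.mem_setOf_eq]
    have : ‖x 0‖ = 0 := by nlinarith [sq_nonneg ‖x 1‖, norm_nonneg (x 0)]
    simpa using this
  · set S : Set (ℂ × ℂ) :=
      {p : ℂ × ℂ | ‖p.1‖^2 + ‖p.2‖^2 < 1 ∧ ‖p.1‖^2 ≤ s * (‖p.1‖^2 + ‖p.2‖^2)} with hS
    have hSm : MeasurableSet S := by
      apply MeasurableSet.inter
      · exact measurableSet_lt ((measurable_fst.norm.pow_const 2).add
          (measurable_snd.norm.pow_const 2)) measurable_const
      · exact measurableSet_le (measurable_fst.norm.pow_const 2)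
          (((measurable_fst.norm.pow_const 2).add
            (measurable_snd.norm.pow_const 2)).const_mul s)
    have hpre : {x : Fin 2 → ℂ | ‖x 0‖^2 + ‖x 1‖^2 < 1 ∧ ‖x 0‖^2 ≤ s * (‖x 0‖^2 + ‖x 1‖^2)}
        = MeasurableEquiv.finTwoArrow ⁻¹' S := by
      ext x; simp [hS, MeasurableEquiv.finTwoArrow_apply]
    rw [hpre, (volume_preserving_finTwoArrow ℂ).measure_preimage hSm.nullMeasurableSet,
      Measure.volume_eq_prod, Measure.prod_apply hSm]
    have hsec : ∀ z : ℂ, (Prod.mk z ⁻¹' S)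
        = ball (0:ℂ) (Real.sqrt (1 - ‖z‖^2)) \ ball (0:ℂ) (Real.sqrt ((1-s) * ‖z‖^2 / s)) := by
      intro z
      ext w
      simp only [hS, Set.mem_preimage, Set.mem_setOf_eq, Set.mem_diff]
      constructor
      · rintro ⟨hlt, hle⟩
        refine ⟨mem_ball_zero_iff.mpr ((Real.lt_sqrt (norm_nonneg w)).mpr (by linarith)),
          fun hw => ?_⟩
        have hA := (Real.lt_sqrt (norm_nonneg w)).mp (mem_ball_zero_iff.mp hw)
        have := (div_le_iff₀ hs).mpr (by nlinarith : (1-s)*‖z‖^2 ≤ ‖w‖^2 * s)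
        linarith
      · rintro ⟨hb, ha⟩
        have h1' := (Real.lt_sqrt (norm_nonneg w)).mp (mem_ball_zero_iff.mp hb)
        have h3' : (1-s) * ‖z‖^2 / s ≤ ‖w‖^2 := by
          by_contra hc
          push_neg at hc
          exact ha (mem_ball_zero_iff.mpr ((Real.lt_sqrt (norm_nonneg w)).mpr hc))
        have := (div_le_iff₀ hs).mp h3'
        exact ⟨by linarith, by nlinarith⟩
    simp_rw [hsec]
    have hvol : ∀ z : ℂ, volume (ball (0:ℂ) (Real.sqrt (1 - ‖z‖^2))
        \ ball (0:ℂ) (Real.sqrt ((1-s) * ‖z‖^2 / s)))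
        = ENNReal.ofReal (1 - ‖z‖^2/s) * NNReal.pi := by
      intro z
      rw [vol_annulus _ _ (div_nonneg (mul_nonneg (by linarith) (sq_nonneg _)) hs.le)]
      congr 2
      field_simp
      ring
    simp_rw [hvol]
    rw [lintegral_mul_const _ (by fun_prop), lint_complex s hs]

lemma finrank_E2 : Module.finrank ℝ E2 = 4 := by
  rw [(WithLp.linearEquiv 2 ℝ (Fin 2 → ℂ)).finrank_eq]
  simp [Module.finrank_pi_fintype, Complex.finrank_real_complex]

lemma norm_sq_E2 (x : E2) : ‖x‖^2 = ‖x 0‖^2 + ‖x 1‖^2 := by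
  rw [EuclideanSpace.norm_eq, Real.sq_sqrt (by positivity)]
  simp [Fin.sum_univ_two]

lemma measurable_A (s : ℝ) :
    MeasurableSet {h : sphere (0:E2) 1 | ‖(h : E2) 0‖^2 ≤ s} := by
  have hc : Continuous fun h : sphere (0:E2) 1 => ‖(h : E2) 0‖^2 :=
    (((PiLp.continuous_apply 2 _ (0 : Fin 2)).comp continuous_subtype_val).norm.pow 2)
  exact hc.measurable measurableSet_Iic

lemma cone_eq (s : ℝ) :
    Set.Ioo (0:ℝ) 1 • (Subtype.val '' {h : sphere (0:E2) 1 | ‖(h : E2) 0‖^2 ≤ s})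
      = {x : E2 | 0 < ‖x‖ ∧ ‖x‖ < 1 ∧ ‖x 0‖^2 ≤ s * ‖x‖^2} := by
  ext x
  constructor
  · rintro ⟨r, hr, y, ⟨h, (hh : ‖(h : E2) 0‖^2 ≤ s), rfl⟩, rfl⟩
    have hhn : ‖(h : E2)‖ = 1 := mem_sphere_zero_iff_norm.mp h.2
    have hrn : ‖r • (h : E2)‖ = r := by
      rw [norm_smul, Real.norm_eq_abs, abs_of_pos hr.1, hhn, mul_one]
    have hc0 : (r • (h : E2)) 0 = r • ((h : E2) 0) := rfl
    beta_reduce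
    refine ⟨by rw [hrn]; exact hr.1, by rw [hrn]; exact hr.2, ?_⟩
    rw [hc0, hrn, norm_smul, Real.norm_eq_abs, abs_of_pos hr.1, mul_pow]
    nlinarith [hr.1, sq_nonneg r]
  · rintro ⟨hx0, hx1, hxs⟩
    have hxne : x ≠ 0 := norm_pos_iff.mp hx0
    refine ⟨‖x‖, ⟨hx0, hx1⟩, ‖x‖⁻¹ • x,
      ⟨⟨⟨‖x‖⁻¹ • x, mem_sphere_zero_iff_norm.mpr (norm_smul_inv_norm hxne)⟩, ?_, rfl⟩, ?_⟩⟩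
    · show ‖(‖x‖⁻¹ • x) 0‖^2 ≤ s
      have hc0 : (‖x‖⁻¹ • x) 0 = ‖x‖⁻¹ • (x 0) := rfl
      rw [hc0, norm_smul, Real.norm_eq_abs, abs_of_pos (by positivity), mul_pow]
      have h2 : (‖x‖⁻¹)^2 * ‖x 0‖^2 ≤ (‖x‖⁻¹)^2 * (s * ‖x‖^2) :=
        mul_le_mul_of_nonneg_left hxs (by positivity)
      calc (‖x‖⁻¹)^2 * ‖x 0‖^2 ≤ (‖x‖⁻¹)^2 * (s * ‖x‖^2) := h2
        _ = s := by field_simp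
    · beta_reduce
      rw [smul_smul, mul_inv_cancel₀ (ne_of_gt hx0), one_smul]

lemma nu_A (s : ℝ) (h0 : 0 ≤ s) (h1 : s ≤ 1) :
    (volume : Measure E2).toSphere {h : sphere (0:E2) 1 | ‖(h : E2) 0‖^2 ≤ s}
      = 4 * (ENNReal.ofReal (s/2) * NNReal.pi * NNReal.pi) := by
  rw [Measure.toSphere_apply' _ (measurable_A s), cone_eq, finrank_E2]
  have hzero : volume {(0 : E2)} = 0 := by
    exact measure_singleton _
  have hdiff : {x : E2 | 0 < ‖x‖ ∧ ‖x‖ < 1 ∧ ‖x 0‖^2 ≤ s * ‖x‖^2}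
      = {x : E2 | ‖x‖ < 1 ∧ ‖x 0‖^2 ≤ s * ‖x‖^2} \ {0} := by
    ext x
    simp only [Set.mem_setOf_eq, Set.mem_diff, Set.mem_singleton_iff]
    constructor
    · rintro ⟨a, b, c⟩
      exact ⟨⟨b, c⟩, fun h => by simp [h] at a⟩
    · rintro ⟨⟨b, c⟩, hne⟩
      exact ⟨norm_pos_iff.mpr hne, b, c⟩
  rw [hdiff, measure_diff_null hzero]
  have hset : {x : E2 | ‖x‖ < 1 ∧ ‖x 0‖^2 ≤ s * ‖x‖^2}
      = {x : E2 | ‖x 0‖^2 + ‖x 1‖^2 < 1 ∧ ‖x 0‖^2 ≤ s * (‖x 0‖^2 + ‖x 1‖^2)} := by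
    ext x
    rw [Set.mem_setOf_eq, Set.mem_setOf_eq, ← norm_sq_E2]
    constructor
    · rintro ⟨a, b⟩
      exact ⟨by nlinarith [norm_nonneg x], b⟩
    · rintro ⟨a, b⟩
      refine ⟨?_, b⟩
      nlinarith [norm_nonneg x]
  rw [hset]
  have := vol_cone_coords s h0 h1
  rw [show (volume : Measure E2)
      {x : E2 | ‖x 0‖^2 + ‖x 1‖^2 < 1 ∧ ‖x 0‖^2 ≤ s * (‖x 0‖^2 + ‖x 1‖^2)}
      = volume {x : Fin 2 → ℂ | ‖x 0‖^2 + ‖x 1‖^2 < 1 ∧ ‖x 0‖^2 ≤ s * (‖x 0‖^2 + ‖x 1‖^2)}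
      from by rw [show (volume : Measure E2) = Measure.map (MeasurableEquiv.toLp 2 (Fin 2 → ℂ))
        volume from rfl, MeasurableEquiv.map_apply]; rfl, this]
  norm_num

lemma coord_sq_le_one (h : sphere (0:E2) 1) : ‖(h : E2) 0‖^2 ≤ 1 := by
  have h2 := norm_sq_E2 (h : E2)
  have h3 : ‖(h : E2)‖ = 1 := mem_sphere_zero_iff_norm.mp h.2
  nlinarith [sq_nonneg ‖(h : E2) 1‖]

lemma K_pos : (4 * (ENNReal.ofReal ((1:ℝ)/2) * NNReal.pi * NNReal.pi) : ℝ≥0∞) ≠ 0 := by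
  have hπ : (NNReal.pi : ℝ≥0∞) ≠ 0 := by
    simp [← NNReal.coe_eq_zero, Real.pi_ne_zero]
  refine mul_ne_zero (by norm_num) (mul_ne_zero (mul_ne_zero ?_ hπ) hπ)
  simp [ENNReal.ofReal_eq_zero]

lemma K_fin : (4 * (ENNReal.ofReal ((1:ℝ)/2) * NNReal.pi * NNReal.pi) : ℝ≥0∞) ≠ ⊤ := by
  refine ENNReal.mul_ne_top (by norm_num) ?_
  exact ENNReal.mul_ne_top (ENNReal.mul_ne_top ENNReal.ofReal_ne_top ENNReal.coe_ne_top)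
    ENNReal.coe_ne_top

lemma A_univ : {h : sphere (0:E2) 1 | ‖(h : E2) 0‖^2 ≤ (1:ℝ)} = Set.univ := by
  ext h
  simpa using coord_sq_le_one h

lemma mu_A (μ : Measure (sphere (0 : E2) 1))
    (hμ : μ = ((volume : Measure E2).toSphere Set.univ)⁻¹ • (volume : Measure E2).toSphere)
    (s : ℝ) :
    μ {h : sphere (0:E2) 1 | ‖(h : E2) 0‖^2 ≤ s} = ENNReal.ofReal (min s 1) := by
  set K : ℝ≥0∞ := 4 * (ENNReal.ofReal ((1:ℝ)/2) * NNReal.pi * NNReal.pi) with hK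
  have huniv : (volume : Measure E2).toSphere Set.univ = K := by
    rw [← A_univ, nu_A 1 zero_le_one le_rfl]
  rcases lt_or_ge s 0 with hs | hs
  · have he : {h : sphere (0:E2) 1 | ‖(h : E2) 0‖^2 ≤ s} = ∅ := by
      ext h
      simp only [Set.mem_setOf_eq, Set.mem_empty_iff_false, iff_false, not_le]
      exact lt_of_lt_of_le hs (sq_nonneg _)
    rw [he, measure_empty, min_eq_left (by linarith), ENNReal.ofReal_eq_zero.mpr hs.le]
  rcases le_or_gt s 1 with hs1 | hs1
  · rw [hμ, Measure.smul_apply, smul_eq_mul, huniv, nu_A s hs hs1]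
    have : (4 : ℝ≥0∞) * (ENNReal.ofReal (s/2) * NNReal.pi * NNReal.pi)
        = ENNReal.ofReal s * K := by
      rw [hK, show s/2 = s * (1/2) by ring, ENNReal.ofReal_mul hs]
      ring
    rw [this, min_eq_left hs1, ← mul_assoc, mul_comm (K⁻¹) _, mul_assoc,
      ENNReal.inv_mul_cancel K_pos K_fin, mul_one]
  · have he : {h : sphere (0:E2) 1 | ‖(h : E2) 0‖^2 ≤ s} = Set.univ := by
      ext h
      simpa using le_trans (coord_sq_le_one h) hs1.le
    rw [he, hμ, Measure.smul_apply, smul_eq_mul, huniv, min_eq_right hs1.le,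
      ENNReal.ofReal_one, ENNReal.inv_mul_cancel K_pos K_fin]

/-- If `h` is isotropically (uniformly) distributed on the unit sphere of `ℂ²`
(the normalized surface measure), then `Y = λ₁|h₁|² + λ₂|h₂|²` is uniformly
distributed on `[λ₂, λ₁]`. -/
theorem weighted_norm_uniform (l₁ l₂ : ℝ) (hl : l₁ > l₂) (hl₂ : l₂ ≥ 0)
    (μ : Measure (sphere (0 : EuclideanSpace ℂ (Fin 2)) 1))
    (hμ : μ = ((volume : Measure (EuclideanSpace ℂ (Fin 2))).toSphere Set.univ)⁻¹ •
      (volume : Measure (EuclideanSpace ℂ (Fin 2))).toSphere) :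
    Measure.map
      (fun h : sphere (0 : EuclideanSpace ℂ (Fin 2)) 1 =>
        l₁ * ‖(h : EuclideanSpace ℂ (Fin 2)) 0‖ ^ 2 +
          l₂ * ‖(h : EuclideanSpace ℂ (Fin 2)) 1‖ ^ 2) μ
      = (ENNReal.ofReal (l₁ - l₂))⁻¹ • volume.restrict (Set.Icc l₂ l₁) := by
  have hd : (0:ℝ) < l₁ - l₂ := by linarith
  have hfc : Continuous (fun h : sphere (0 : E2) 1 =>
      l₁ * ‖(h : E2) 0‖ ^ 2 + l₂ * ‖(h : E2) 1‖ ^ 2) :=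
    (continuous_const.mul
        (((PiLp.continuous_apply 2 _ (0 : Fin 2)).comp continuous_subtype_val).norm.pow 2)).add
      (continuous_const.mul
        (((PiLp.continuous_apply 2 _ (1 : Fin 2)).comp continuous_subtype_val).norm.pow 2))
  have hprobμ : IsProbabilityMeasure μ := by
    constructor
    rw [← A_univ, mu_A μ hμ 1, min_self, ENNReal.ofReal_one]
  have hprob : IsProbabilityMeasure (Measure.map (fun h : sphere (0 : E2) 1 =>
      l₁ * ‖(h : E2) 0‖ ^ 2 + l₂ * ‖(h : E2) 1‖ ^ 2) μ) :=
    Measure.isProbabilityMeasure_map hfc.measurable.aemeasurable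
  refine Measure.ext_of_Iic _ _ fun t => ?_
  rw [Measure.map_apply hfc.measurable measurableSet_Iic]
  have hpre : (fun h : sphere (0 : E2) 1 =>
      l₁ * ‖(h : E2) 0‖ ^ 2 + l₂ * ‖(h : E2) 1‖ ^ 2) ⁻¹' Set.Iic t
      = {h : sphere (0:E2) 1 | ‖(h : E2) 0‖^2 ≤ (t - l₂)/(l₁ - l₂)} := by
    ext h
    have hab : ‖(h : E2) 0‖^2 + ‖(h : E2) 1‖^2 = 1 := by
      rw [← norm_sq_E2, mem_sphere_zero_iff_norm.mp h.2, one_pow]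
    simp only [Set.mem_preimage, Set.mem_Iic, Set.mem_setOf_eq]
    rw [le_div_iff₀ hd]
    constructor <;> intro hle <;> nlinarith
  rw [hpre, mu_A μ hμ]
  rw [Measure.smul_apply, Measure.restrict_apply measurableSet_Iic, smul_eq_mul]
  have hinter : Set.Iic t ∩ Set.Icc l₂ l₁ = Set.Icc l₂ (min t l₁) := by
    ext x
    simp only [Set.mem_inter_iff, Set.mem_Iic, Set.mem_Icc, le_min_iff]
    tauto
  rw [hinter, Real.volume_Icc]
  have hmin : min ((t - l₂)/(l₁ - l₂)) 1 = (min t l₁ - l₂)/(l₁ - l₂) := by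
    rcases le_total t l₁ with h | h
    · rw [min_eq_left h, min_eq_left ((div_le_one hd).mpr (by linarith))]
    · rw [min_eq_right h, min_eq_right ((le_div_iff₀ hd).mpr (by linarith)), div_self hd.ne']
  rw [hmin, ENNReal.ofReal_div_of_pos hd, div_eq_mul_inv, mul_comm]
end

section
/- The function f(z) = (1/√(1-z²)) · log((1+√(1-z²))/(1-√(1-z²))) is strictly monotonically decreasing on (0,1), with lim_{z→0⁺} f(z) = ∞ and lim_{z→1⁻} f(z) = 2. -/
open Real Set Filter Topology

/-- `f(z) = (1/√(1−z²)) log((1+√(1−z²))/(1−√(1−z²)))`. -/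
noncomputable def fPaper (z : ℝ) : ℝ :=
  (1 / Real.sqrt (1 - z ^ 2)) *
    Real.log ((1 + Real.sqrt (1 - z ^ 2)) / (1 - Real.sqrt (1 - z ^ 2)))

noncomputable def gAux (t : ℝ) : ℝ := (1 / t) * Real.log ((1 + t) / (1 - t))

noncomputable def hAux (t : ℝ) : ℝ := Real.log (1 + t) - Real.log (1 - t)

lemma hAux_hasDerivAt {t : ℝ} (h1 : -1 < t) (h2 : t < 1) :
    HasDerivAt hAux (1 / (1 + t) + 1 / (1 - t)) t := by
  have d1 : HasDerivAt (fun s : ℝ => Real.log (1 + s)) (1 / (1 + t)) t := by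
    have : HasDerivAt (fun s : ℝ => 1 + s) 1 t := by
      simpa using (hasDerivAt_id t).const_add 1
    simpa [one_div, Function.comp_def] using (Real.hasDerivAt_log (by linarith)).comp t this
  have d2 : HasDerivAt (fun s : ℝ => Real.log (1 - s)) (-(1 / (1 - t))) t := by
    have : HasDerivAt (fun s : ℝ => 1 - s) (-1) t := by
      simpa using (hasDerivAt_id t).const_sub 1
    have := (Real.hasDerivAt_log (x := 1 - t) (by linarith)).comp t this
    simpa [one_div, Function.comp_def] using this
  have e : hAux = (fun s => log (1 + s)) - fun s => log (1 - s) := by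
    funext s; simp [hAux]
  rw [e, show 1 / (1 + t) + 1 / (1 - t) = 1 / (1 + t) - -(1 / (1 - t)) by ring]
  exact d1.sub d2

lemma hAux_convex : StrictConvexOn ℝ (Set.Ico (0:ℝ) 1) hAux := by
  have hint : interior (Set.Ico (0:ℝ) 1) = Set.Ioo 0 1 := interior_Ico
  have hcont : ContinuousOn hAux (Set.Ico (0:ℝ) 1) := by
    intro t ht
    have h1 : (-1:ℝ) < t := by linarith [ht.1]
    exact (hAux_hasDerivAt h1 ht.2).continuousAt.continuousWithinAt
  have hmono : StrictMonoOn (deriv hAux) (interior (Set.Ico (0:ℝ) 1)) := by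
    rw [hint]
    intro a ha b hb hab
    rw [(hAux_hasDerivAt (by linarith [ha.1]) ha.2).deriv,
        (hAux_hasDerivAt (by linarith [hb.1]) hb.2).deriv]
    have hpa : (0:ℝ) < 1 + a := by linarith [ha.1]
    have hpa' : (0:ℝ) < 1 - a := by linarith [ha.2]
    have hpb : (0:ℝ) < 1 + b := by linarith [hb.1]
    have hpb' : (0:ℝ) < 1 - b := by linarith [hb.2]
    rw [div_add_div _ _ (ne_of_gt hpa) (ne_of_gt hpa'),
        div_add_div _ _ (ne_of_gt hpb) (ne_of_gt hpb')]
    rw [div_lt_div_iff₀ (by positivity) (by positivity)]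
    nlinarith [ha.1, hab, sq_nonneg a, sq_nonneg b]
  exact hmono.strictConvexOn_of_deriv (convex_Ico 0 1) hcont

lemma gAux_eq {t : ℝ} (h0 : 0 < t) (h1 : t < 1) : gAux t = hAux t / t := by
  rw [gAux, hAux, Real.log_div (by linarith) (by linarith)]
  ring

lemma gAux_strictMono : StrictMonoOn gAux (Set.Ioo (0:ℝ) 1) := by
  intro a ha b hb hab
  rw [gAux_eq ha.1 ha.2, gAux_eq hb.1 hb.2]
  have h0 : hAux 0 = 0 := by simp [hAux]
  have := hAux_convex.secant_strict_mono (a := 0) (x := a) (y := b)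
    (by constructor <;> norm_num) ⟨ha.1.le, ha.2⟩ ⟨hb.1.le, hb.2⟩
    ha.1.ne' hb.1.ne' hab
  simpa [h0] using this

lemma sqrt_mem {z : ℝ} (hz : z ∈ Set.Ioo (0:ℝ) 1) :
    Real.sqrt (1 - z ^ 2) ∈ Set.Ioo (0:ℝ) 1 := by
  obtain ⟨h0, h1⟩ := hz
  have hlt : 1 - z ^ 2 < 1 := by nlinarith
  have hpos : 0 < 1 - z ^ 2 := by nlinarith
  constructor
  · exact Real.sqrt_pos.mpr hpos
  · calc Real.sqrt (1 - z ^ 2) < Real.sqrt 1 := by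
          exact Real.sqrt_lt_sqrt hpos.le hlt
      _ = 1 := Real.sqrt_one

lemma fPaper_eq (z : ℝ) : fPaper z = gAux (Real.sqrt (1 - z ^ 2)) := rfl

theorem fPaper_strictAnti_and_limits :
    StrictAntiOn fPaper (Set.Ioo (0 : ℝ) 1) ∧
    Filter.Tendsto fPaper (nhdsWithin 0 (Set.Ioo (0 : ℝ) 1)) Filter.atTop ∧
    Filter.Tendsto fPaper (nhdsWithin 1 (Set.Ioo (0 : ℝ) 1)) (nhds 2) := by
  refine ⟨?_, ?_, ?_⟩
  · intro a ha b hb hab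
    rw [fPaper_eq, fPaper_eq]
    have h1 : Real.sqrt (1 - b ^ 2) < Real.sqrt (1 - a ^ 2) := by
      apply Real.sqrt_lt_sqrt
      · nlinarith [hb.1, hb.2]
      · nlinarith [ha.1, hb.1]
    exact gAux_strictMono (sqrt_mem hb) (sqrt_mem ha) h1
  · -- limit at 0 : atTop
    have hmap : Tendsto (fun z : ℝ => Real.sqrt (1 - z ^ 2))
        (𝓝[Set.Ioo (0:ℝ) 1] 0) (𝓝[<] (1:ℝ)) := by
      rw [tendsto_nhdsWithin_iff]
      constructor
      · have : ContinuousAt (fun z : ℝ => Real.sqrt (1 - z ^ 2)) 0 := by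
          fun_prop
        have h0 : Real.sqrt (1 - (0:ℝ) ^ 2) = 1 := by norm_num
        simpa [h0] using (this.continuousWithinAt.tendsto)
      · filter_upwards [self_mem_nhdsWithin] with z hz
        exact (sqrt_mem hz).2
    have hg : Tendsto gAux (𝓝[<] (1:ℝ)) atTop := by
      have hlog : Tendsto (fun t : ℝ => Real.log ((1 + t) / (1 - t)))
          (𝓝[<] (1:ℝ)) atTop := by
        apply Real.tendsto_log_atTop.comp
        have hnum : Tendsto (fun t : ℝ => 1 + t) (𝓝[<] (1:ℝ)) (𝓝 2) := by
          have hc : Continuous (fun t : ℝ => 1 + t) := by continuity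
          have : Tendsto (fun t : ℝ => 1 + t) (𝓝 (1:ℝ)) (𝓝 2) := by
            simpa [one_add_one_eq_two] using hc.tendsto 1
          exact this.mono_left nhdsWithin_le_nhds
        have hden : Tendsto (fun t : ℝ => (1 - t)⁻¹) (𝓝[<] (1:ℝ)) atTop := by
          apply tendsto_inv_nhdsGT_zero.comp
          rw [tendsto_nhdsWithin_iff]
          constructor
          · have hc : Continuous (fun t : ℝ => 1 - t) := by continuity
            have : Tendsto (fun t : ℝ => 1 - t) (𝓝 (1:ℝ)) (𝓝 0) := by
              simpa using hc.tendsto 1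
            exact this.mono_left nhdsWithin_le_nhds
          · filter_upwards [self_mem_nhdsWithin] with t ht
            simp only [Set.mem_Iio] at ht
            exact Set.mem_Ioi.mpr (by linarith)
        have := hnum.pos_mul_atTop (by norm_num) hden
        simpa [div_eq_mul_inv] using this
      have hinv : Tendsto (fun t : ℝ => 1 / t) (𝓝[<] (1:ℝ)) (𝓝 1) := by
        have : Tendsto (fun t : ℝ => 1 / t) (𝓝 (1:ℝ)) (𝓝 1) := by
          have := (continuousAt_inv₀ (x := (1:ℝ)) one_ne_zero).tendsto
          simpa [one_div] using this
        exact this.mono_left nhdsWithin_le_nhds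
      exact hinv.pos_mul_atTop (by norm_num) hlog
    have := hg.comp hmap
    exact this.congr (fun z => (fPaper_eq z).symm)
  · -- limit at 1 : 2
    have hmap : Tendsto (fun z : ℝ => Real.sqrt (1 - z ^ 2))
        (𝓝[Set.Ioo (0:ℝ) 1] 1) (𝓝[>] (0:ℝ)) := by
      rw [tendsto_nhdsWithin_iff]
      constructor
      · have : ContinuousAt (fun z : ℝ => Real.sqrt (1 - z ^ 2)) 1 := by
          fun_prop
        have h0 : Real.sqrt (1 - (1:ℝ) ^ 2) = 0 := by norm_num
        simpa [h0] using (this.continuousWithinAt.tendsto)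
      · filter_upwards [self_mem_nhdsWithin] with z hz
        exact (sqrt_mem hz).1
    have hg : Tendsto gAux (𝓝[>] (0:ℝ)) (𝓝 2) := by
      have hder : HasDerivAt hAux 2 0 := by
        have := hAux_hasDerivAt (t := 0) (by norm_num) (by norm_num)
        norm_num at this
        exact this
      have hslope := hasDerivAt_iff_tendsto_slope.mp hder
      have : Tendsto (slope hAux 0) (𝓝[>] (0:ℝ)) (𝓝 2) :=
        hslope.mono_left (nhdsWithin_mono _ (fun x hx => Set.mem_compl_singleton_iff.mpr
          (ne_of_gt hx)))
      apply this.congr'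
      filter_upwards [self_mem_nhdsWithin, Ioo_mem_nhdsGT (by norm_num : (0:ℝ) < 1)]
        with t ht ht1
      rw [slope_def_field, gAux_eq ht ht1.2]
      have h0 : hAux 0 = 0 := by simp [hAux]
      rw [h0]
      simp only [sub_zero]
    exact (hg.comp hmap).congr (fun z => (fPaper_eq z).symm)
end
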